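/- For every positive integer g and every integer t ≥ 1, a_t = (1/2)·((g+√(g²−1))^t + (g−√(g²−1))^t). -/

import Mathlib

/-- `I'_t(g)`: tuples `(i_1, …, i_t)` with entries in `{±1, …, ±g}` such that there is no
`j` with `(i_j, i_{j+1}) = (-1, 1)`. -/
noncomputable def Bset (g t : ℕ) : Finset (Fin t → ℤ) :=
  (Fintype.piFinset fun _ => ((Finset.Icc (-(g : ℤ)) (g : ℤ)).erase 0)).filter
    (fun v => ∀ j k : Fin t, (k : ℕ) = (j : ℕ) + 1 → ¬(v j = -1 ∧ v k = 1))

/-- `I_t(g)`: the tuples in `I'_t(g)` whose last entry is positive. -/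
noncomputable def Aset (g t : ℕ) : Finset (Fin t → ℤ) :=
  (Bset g t).filter (fun v => ∀ j : Fin t, (j : ℕ) = t - 1 → 0 < v j)

/-!
Words over `{±1, …, ±g}` avoiding the factor `(-1, 1)` can be counted by their last letter.
Appending a letter `x` to an admissible word of length `n + 1` fails only when the word ends in
`-1` and `x = 1`, and the admissible words ending in `-1` are exactly the admissible words of
length `n` followed by `-1`. Hence `b_{n+2} = 2g b_{n+1} - b_n` and `a_{n+2} = g b_{n+1} - b_n`,
so `b_n = U_n(g)` and `a_n = T_n(g)` are Chebyshev polynomials evaluated at `g`, and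
`2 T_n(x) = (x + y)^n + (x - y)^n` whenever `y² = x² - 1`.
-/

open Finset Polynomial.Chebyshev

section PairAvoiding

variable {α : Type*} [DecidableEq α] (S : Finset α) (a b : α)

def pairAvoiding (n : ℕ) : Finset (Fin n → α) :=
  (Fintype.piFinset fun _ => S).filter
    (fun v => ∀ j k : Fin n, (k : ℕ) = (j : ℕ) + 1 → ¬(v j = a ∧ v k = b))

variable {S a b}

theorem snoc_mem_pairAvoiding {n : ℕ} (w : Fin n → α) (x : α) :
    (Fin.snoc w x : Fin (n + 1) → α) ∈ pairAvoiding S a b (n + 1) ↔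
      w ∈ pairAvoiding S a b n ∧ x ∈ S ∧ ∀ j : Fin n, (j : ℕ) + 1 = n → ¬(w j = a ∧ x = b) := by
  simp only [pairAvoiding, mem_filter, Fintype.mem_piFinset, Fin.forall_fin_succ',
    Fin.snoc_castSucc, Fin.snoc_last, Fin.val_castSucc, Fin.val_last]
  have hlt (i : Fin n) : (i : ℕ) ≠ n + 1 := by omega
  simp only [hlt, false_imp_iff, implies_true, n.succ_ne_self, forall_and, eq_comm (a := n)]
  tauto

theorem snoc_mem_pairAvoiding_of_ne {n : ℕ} (w : Fin n → α) {x : α} (hx : x ≠ b) :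
    (Fin.snoc w x : Fin (n + 1) → α) ∈ pairAvoiding S a b (n + 1) ↔
      w ∈ pairAvoiding S a b n ∧ x ∈ S := by
  simp [snoc_mem_pairAvoiding, hx]

theorem snoc_mem_pairAvoiding_succ {n : ℕ} (w : Fin (n + 1) → α) (x : α) :
    (Fin.snoc w x : Fin (n + 2) → α) ∈ pairAvoiding S a b (n + 2) ↔
      w ∈ pairAvoiding S a b (n + 1) ∧ x ∈ S ∧ ¬(w (Fin.last n) = a ∧ x = b) := by
  rw [snoc_mem_pairAvoiding]
  refine and_congr_right' (and_congr_right' ⟨fun h => h _ rfl, fun h j hj => ?_⟩)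
  rwa [show j = Fin.last n from Fin.ext (by simpa using hj)]

theorem card_filter_pairAvoiding_add_two (P : α → Prop) [DecidablePred P]
    (ha : a ∈ S) (hb : b ∈ S) (hab : a ≠ b) (hPb : P b) (n : ℕ) :
    #((pairAvoiding S a b (n + 2)).filter fun v => P (v (Fin.last _))) +
        #(pairAvoiding S a b n) =
      #(S.filter P) * #(pairAvoiding S a b (n + 1)) := by
  set pairs := pairAvoiding S a b (n + 1) ×ˢ S.filter P
  have hgood : #((pairAvoiding S a b (n + 2)).filter fun v => P (v (Fin.last _))) =
      #(pairs.filter fun p => ¬(p.1 (Fin.last n) = a ∧ p.2 = b)) := by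
    refine card_nbij' (fun v => (Fin.init v, v (Fin.last _))) (fun p => Fin.snoc p.1 p.2)
      ?_ ?_ (fun v _ => Fin.snoc_init_self v) (fun p _ => by simp)
    · intro v hv
      simp only [mem_coe, mem_filter, pairs, mem_product] at hv ⊢
      rw [← Fin.snoc_init_self v, snoc_mem_pairAvoiding_succ] at hv
      simp_all
    · rintro ⟨w, x⟩ h
      simp only [mem_coe, mem_filter, pairs, mem_product] at h ⊢
      rw [snoc_mem_pairAvoiding_succ]
      simp_all
  have hbad : #(pairs.filter fun p => p.1 (Fin.last n) = a ∧ p.2 = b) =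
      #(pairAvoiding S a b n) := by
    refine card_nbij' (fun p => Fin.init p.1) (fun w => (Fin.snoc w a, b))
      ?_ ?_ ?_ (fun w _ => by simp)
    · rintro ⟨w, x⟩ h
      simp only [mem_coe, mem_filter, pairs, mem_product] at h ⊢
      have hw := h.1.1
      rw [← Fin.snoc_init_self w, h.2.1, snoc_mem_pairAvoiding_of_ne _ hab] at hw
      exact hw.1
    · intro w hw
      simp only [mem_coe, mem_filter, pairs, mem_product] at hw ⊢
      simp [snoc_mem_pairAvoiding_of_ne _ hab, *]
    · rintro ⟨w, x⟩ h
      simp only [mem_coe, mem_filter, pairs, mem_product] at h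
      rw [Prod.mk.injEq, ← h.2.1, ← h.2.2]
      exact ⟨Fin.snoc_init_self w, rfl⟩
  rw [hgood, ← hbad, add_comm, card_filter_add_card_filter_not, card_product, mul_comm]

theorem card_filter_pairAvoiding_one (P : α → Prop) [DecidablePred P] :
    #((pairAvoiding S a b 1).filter fun v => P (v (Fin.last 0))) = #(S.filter P) := by
  refine card_nbij' (fun v => v 0) (fun x _ => x) ?_ ?_ ?_ ?_
  · intro v hv
    simp_all [pairAvoiding]
  · intro x hx
    simp_all [pairAvoiding, Fin.val_eq_zero]
  · intro v _
    funext i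
    rw [Fin.fin_one_eq_zero i]
  · intro x _
    rfl

end PairAvoiding

theorem two_mul_eval_T_eq {R : Type*} [CommRing R] {x y : R} (hy : y ^ 2 = x ^ 2 - 1) (n : ℕ) :
    2 * (T R n).eval x = (x + y) ^ n + (x - y) ^ n := by
  induction n using Nat.twoStepInduction with
  | zero => simp; norm_num
  | one => simp; ring
  | more n ih₀ ih₁ =>
    push_cast at ih₁ ⊢
    rw [T_add_two]
    simp only [Polynomial.eval_sub, Polynomial.eval_mul, Polynomial.eval_ofNat, Polynomial.eval_X]
    linear_combination 2 * x * ih₁ - ih₀ - ((x + y) ^ n + (x - y) ^ n) * hy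

noncomputable def signedRange (g : ℕ) : Finset ℤ := (Icc (-(g : ℤ)) g).erase 0

theorem Bset_eq_pairAvoiding (g t : ℕ) : Bset g t = pairAvoiding (signedRange g) (-1) 1 t := rfl

theorem Aset_succ_eq_filter (g n : ℕ) :
    Aset g (n + 1) = (Bset g (n + 1)).filter fun v => 0 < v (Fin.last n) := by
  refine filter_congr fun v _ => ⟨fun h => h _ rfl, fun h j hj => ?_⟩
  rwa [show j = Fin.last n from Fin.ext (by simpa using hj)]

theorem card_signedRange (g : ℕ) : #(signedRange g) = 2 * g := by
  rw [signedRange, card_erase_of_mem (by simp), Int.card_Icc]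
  omega

theorem card_filter_pos_signedRange (g : ℕ) : #((signedRange g).filter (0 < ·)) = g := by
  rw [show (signedRange g).filter (0 < ·) = Icc 1 (g : ℤ) by ext; simp [signedRange]; omega,
    Int.card_Icc]
  omega

theorem card_Bset_one (g : ℕ) : #(Bset g 1) = 2 * g := by
  simpa [Bset_eq_pairAvoiding, card_signedRange] using
    card_filter_pairAvoiding_one (S := signedRange g) (a := -1) (b := 1) (fun _ => True)

theorem card_Aset_one (g : ℕ) : #(Aset g 1) = g := by
  simpa [Aset_succ_eq_filter, Bset_eq_pairAvoiding, card_filter_pos_signedRange] using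
    card_filter_pairAvoiding_one (S := signedRange g) (a := -1) (b := 1) (0 < ·)

variable {g : ℕ}

theorem neg_one_mem_signedRange (hg : 0 < g) : -1 ∈ signedRange g := by
  simp [signedRange]; omega

theorem one_mem_signedRange (hg : 0 < g) : 1 ∈ signedRange g := by
  simp [signedRange]; omega

theorem card_Bset_add_two (hg : 0 < g) (n : ℕ) :
    #(Bset g (n + 2)) + #(Bset g n) = 2 * g * #(Bset g (n + 1)) := by
  simpa [Bset_eq_pairAvoiding, card_signedRange] using
    card_filter_pairAvoiding_add_two (fun _ => True) (neg_one_mem_signedRange hg)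
      (one_mem_signedRange hg) (by norm_num) trivial n

theorem card_Aset_add_two (hg : 0 < g) (n : ℕ) :
    #(Aset g (n + 2)) + #(Bset g n) = g * #(Bset g (n + 1)) := by
  simpa [Aset_succ_eq_filter, Bset_eq_pairAvoiding, card_filter_pos_signedRange] using
    card_filter_pairAvoiding_add_two (0 < ·) (neg_one_mem_signedRange hg)
      (one_mem_signedRange hg) (by norm_num) one_pos n

theorem card_Bset_eq_eval_U (R : Type*) [CommRing R] (hg : 0 < g) (n : ℕ) :
    (#(Bset g n) : R) = (U R n).eval (g : R) := by
  induction n using Nat.twoStepInduction with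
  | zero => simp [Bset]
  | one => simp [card_Bset_one]
  | more n ih₀ ih₁ =>
    have h := congrArg (Nat.cast : ℕ → R) (card_Bset_add_two hg n)
    push_cast at h ih₁ ⊢
    rw [U_add_two]
    simp only [Polynomial.eval_sub, Polynomial.eval_mul, Polynomial.eval_ofNat, Polynomial.eval_X]
    linear_combination h + 2 * g * ih₁ - ih₀

theorem card_Aset_eq_eval_T (R : Type*) [CommRing R] (hg : 0 < g) (n : ℕ) :
    (#(Aset g (n + 1)) : R) = (T R (n + 1 : ℕ)).eval (g : R) := by
  cases n with
  | zero => simp [card_Aset_one]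
  | succ n =>
    have h := congrArg (Nat.cast : ℕ → R) (card_Aset_add_two hg n)
    push_cast at h ⊢
    rw [show (n : ℤ) + 1 + 1 = n + 2 by ring, T_eq_X_mul_U_sub_U]
    simp only [Polynomial.eval_sub, Polynomial.eval_mul, Polynomial.eval_X]
    have hU := card_Bset_eq_eval_U R hg (n + 1)
    push_cast at hU
    rw [← card_Bset_eq_eval_U R hg n, ← hU]
    linear_combination h

/-- For  and , . -/
theorem aset_card_closed_form (g : ℕ) (hg : 0 < g) (t : ℕ) (ht : 1 ≤ t) :
    ((Aset g t).card : ℝ) =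
      (1 / 2) * (((g : ℝ) + Real.sqrt ((g : ℝ) ^ 2 - 1)) ^ t +
        ((g : ℝ) - Real.sqrt ((g : ℝ) ^ 2 - 1)) ^ t) := by
  obtain ⟨n, rfl⟩ := Nat.exists_eq_add_of_le' ht
  have hg₁ : (1 : ℝ) ≤ g := by exact_mod_cast hg
  have hsqrt : Real.sqrt ((g : ℝ) ^ 2 - 1) ^ 2 = (g : ℝ) ^ 2 - 1 := Real.sq_sqrt (by nlinarith)
  rw [card_Aset_eq_eval_T ℝ hg n, ← two_mul_eval_T_eq hsqrt]
  ring
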